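/- (Measure theoretic area formula.) Let X be a metric space and μ a Borel regular measure on X that is σ-finite via a countable open cover by sets of finite μ-measure. Let S be a family of closed sets with size function ζ : S → [0,∞) satisfying the doubling-type condition: there exist c, η > 0 such that for every S ∈ S there is S̃ ∈ S with Ŝ ⊆ S̃, diam S̃ ≤ c · diam S and ζ(S̃) ≤ η · ζ(S), where Ŝ = ⋃{T ∈ S : T ∩ S ≠ ∅, diam T ≤ 2 diam S}. Let A ⊆ X be Borel with S_{μ,ζ} covering A finely and F^ζ(μ,·) Borel on A. If ψ_ζ({x ∈ A : F^ζ(μ,x) = 0}) < ∞ and μ({x ∈ A : F^ζ(μ,x) = ∞}) = 0, then for every Borel set B ⊆ A: μ(B) = ∫_B F^ζ(μ,x) dψ_ζ(x). -/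

import Mathlib

open Set Metric MeasureTheory ENNReal Filter Topology

variable {X : Type*}

section Defs
variable [MetricSpace X] [MeasurableSpace X]

/-- The `δ`-approximating pre-measure `ζ_δ` of the Carathéodory construction built from a
family of sets `S` and a size function `ζ`: the infimum of `∑_j ζ(E_j)` over countable
covers of `R` by members `E_j ∈ S` of diameter at most `δ`. -/
noncomputable def caraPre (S : Set (Set X)) (ζ : Set X → ℝ≥0∞) (δ : ℝ≥0∞) (R : Set X) : ℝ≥0∞ :=
  ⨅ (E : ℕ → Set X) (_ : ∀ n, E n ∈ S ∧ EMetric.diam (E n) ≤ δ) (_ : R ⊆ ⋃ n, E n),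
    ∑' n, ζ (E n)

/-- The Carathéodory approximating measure `ψ_ζ = sup_{δ>0} ζ_δ`. -/
noncomputable def psi (S : Set (Set X)) (ζ : Set X → ℝ≥0∞) (R : Set X) : ℝ≥0∞ :=
  ⨆ (δ : ℝ≥0∞) (_ : 0 < δ), caraPre S ζ δ R

/-- The quotient function `Q_{μ,ζ}`. -/
noncomputable def fedQuot (μ : Measure X) (ζ : Set X → ℝ≥0∞) (T : Set X) : ℝ≥0∞ :=
  if ζ T = 0 then ∞ else if ζ T = ∞ then 0 else μ T / ζ T

/-- The family `S_{μ,ζ}`: members of `S` except those on which `ζ` and `μ` both vanish or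
are both infinite. -/
def adm (μ : Measure X) (S : Set (Set X)) (ζ : Set X → ℝ≥0∞) : Set (Set X) :=
  {T ∈ S | ¬ (ζ T = 0 ∧ μ T = 0) ∧ ¬ (ζ T = ∞ ∧ μ T = ∞)}

/-- A family of sets `𝒮` covers finely at `x` (equivalently, the associated covering
relation is fine at `x`). -/
def Fine (𝒮 : Set (Set X)) (x : X) : Prop :=
  ∀ ε : ℝ≥0∞, 0 < ε → ∃ T ∈ 𝒮, x ∈ T ∧ EMetric.diam T < ε

/-- The Federer density `F^ζ(μ,x)`: the covering limsup of `Q_{μ,ζ}` over members of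
`S_{μ,ζ}` containing `x` with diameter tending to `0`. -/
noncomputable def fedDensity (μ : Measure X) (S : Set (Set X)) (ζ : Set X → ℝ≥0∞) (x : X) :
    ℝ≥0∞ :=
  ⨅ (ε : ℝ≥0∞) (_ : 0 < ε),
    ⨆ (T : Set X) (_ : T ∈ adm μ S ζ ∧ x ∈ T ∧ EMetric.diam T < ε), fedQuot μ ζ T

/-- The size function `ζ_α(T) = c_α diam(T)^α`. -/
noncomputable def sizeDiam (c : ℝ≥0∞) (α : ℝ) (T : Set X) : ℝ≥0∞ :=
  c * EMetric.diam T ^ α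

/-- The enlargement `Ŝ = ⋃ {T ∈ S : T ∩ S ≠ ∅, diam T ≤ 2 diam S}`. -/
def hatSet (S : Set (Set X)) (T : Set X) : Set X :=
  ⋃₀ {U | U ∈ S ∧ (U ∩ T).Nonempty ∧ EMetric.diam U ≤ 2 * EMetric.diam T}

/-- The doubling-type condition on the size function `ζ`: there are constants `c, η > 0`
such that every `S ∈ 𝒮` admits `S̃ ∈ 𝒮` with `Ŝ ⊆ S̃`, `diam S̃ ≤ c diam S` and
`ζ(S̃) ≤ η ζ(S)`. -/
def DoublingSize (S : Set (Set X)) (ζ : Set X → ℝ≥0∞) : Prop :=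
  ∃ c η : ℝ≥0∞, 0 < c ∧ c < ∞ ∧ 0 < η ∧ η < ∞ ∧
    ∀ T ∈ S, ∃ T' ∈ S, hatSet S T ⊆ T' ∧
      EMetric.diam T' ≤ c * EMetric.diam T ∧ ζ T' ≤ η * ζ T

end Defs

/-- The family of all closed balls (with positive radius) of a metric space. -/
def closedBallsF (X : Type*) [MetricSpace X] : Set (Set X) :=
  {T | ∃ (x : X) (r : ℝ), 0 < r ∧ T = Metric.closedBall x r}

/-- The family of all closed subsets of a metric space. -/
def closedSetsF (X : Type*) [MetricSpace X] : Set (Set X) := {T | IsClosed T}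

section DefsM
variable [MetricSpace X] [MeasurableSpace X]

/-- A (outer) measure `μ` is Borel regular if every set is contained in a Borel set of the
same measure. -/
def BorelRegular (μ : Measure X) : Prop :=
  ∀ A : Set X, ∃ B : Set X, MeasurableSet B ∧ A ⊆ B ∧ μ A = μ B

/-- There exists a countable open cover of `X` whose elements have finite `μ`-measure. -/
def SigmaFiniteOpen (μ : Measure X) : Prop :=
  ∃ U : ℕ → Set X, (∀ n, IsOpen (U n)) ∧ (⋃ n, U n) = univ ∧ ∀ n, μ (U n) < ∞

/- The Carathéodory-construction measure `ψ_ζ` as a Borel measure, via the metric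
construction (sets outside the family `S` are given infinite size). -/
open Classical in
noncomputable def psiM [MeasurableSpace X] [BorelSpace X] (S : Set (Set X))
    (ζ : Set X → ℝ≥0∞) : Measure X :=
  Measure.mkMetric' (fun T => if T ∈ S then ζ T else ∞)

/-- The upper (centered) spherical density
`Θ^{*α}(μ,x) = limsup_{r→0⁺} μ(B̄(x,r))/(c_α (2r)^α)`. -/
noncomputable def upperSphDensity (μ : Measure X) (c : ℝ≥0∞) (α : ℝ) (x : X) : ℝ≥0∞ :=
  Filter.limsup
    (fun r : ℝ => μ (Metric.closedBall x r) / (c * ENNReal.ofReal (2 * r) ^ α)) (𝓝[>] 0)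

/-- `X` is diametrically regular: for all `x ∈ X`, `R > 0` there is `δ > 0` such that
`t ↦ diam B(y,t)` is continuous on `(0,δ)` for every `y ∈ B̄(x,R)`. -/
def DiamRegular (X : Type*) [MetricSpace X] : Prop :=
  ∀ x : X, ∀ R > (0:ℝ), ∃ δ > (0:ℝ), ∀ y ∈ Metric.closedBall x R,
    ContinuousOn (fun t : ℝ => Metric.diam (Metric.ball y t)) (Ioo 0 δ)

end DefsM

/-!
Two density comparisons drive the proof. If `F^ζ(μ,·) < s` on `E`, then at small scales every
admissible `T` meeting `E` has `μ T ≤ s ζ(T)`, so each cover of `E` competing in `ψ_ζ` also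
bounds `μ`, and `μ E ≤ s ψ_ζ(E)`. If `F^ζ(μ,·) > u` on `E ⊆ V` with `V` open, the sets `T ⊆ V`
with `u ζ(T) < μ T` cover `E` finely; a disjoint Vitali subfamily `G` has `u ∑_G ζ ≤ μ V`, and
finitely many members of `G` together with the enlargements `S̃` of the others cover `E` at cost
`∑_G ζ + η · (tail of ∑_G ζ)`, which gives `u ψ_ζ(E) ≤ μ V`; outer regularity of `μ` turns this
into `u ψ_ζ(E) ≤ μ E`. Slicing `B` along the levels `t^k < F ≤ t^(k+1)` and letting `t → 1`
yields `μ B = ∫_B F dψ_ζ`: the set `{F = 0}` is `μ`-null by the first comparison because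
`ψ_ζ({F = 0}) < ∞`, and `{F = ∞}` is `ψ_ζ`-null by the second because it is `μ`-null.
-/

namespace ENNReal

theorem le_mul_of_forall_lt_le_mul {a b s : ℝ≥0∞} (hs : s ≠ ∞) (hsb : s ≠ 0 ∨ b ≠ ∞)
    (h : ∀ s', s < s' → s' ≠ ∞ → a ≤ s' * b) : a ≤ s * b := by
  have hlim : Tendsto (fun n : ℕ => (s + (n : ℝ≥0∞)⁻¹) * b) atTop (𝓝 (s * b)) := by
    simpa using ENNReal.Tendsto.mul_const
      (tendsto_const_nhds.add ENNReal.tendsto_inv_nat_nhds_zero) (by simpa using hsb)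
  refine ge_of_tendsto hlim (eventually_atTop.2 ⟨1, fun n hn => h _ ?_ ?_⟩)
  · exact lt_add_right hs (ENNReal.inv_ne_zero.2 (natCast_ne_top n))
  · exact add_ne_top.2 ⟨hs, inv_ne_top.2 (by exact_mod_cast (by omega : n ≠ 0))⟩

theorem exists_pos_ne_top_le_and_mul_le {r c : ℝ≥0∞} (hr : 0 < r) (hc : c ≠ ∞) :
    ∃ δ : ℝ≥0∞, 0 < δ ∧ δ ≠ ∞ ∧ δ ≤ r ∧ c * δ ≤ r :=
  ⟨min (min 1 r) (r / c), lt_min (lt_min one_pos hr) (ENNReal.div_pos hr.ne' hc),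
    ne_top_of_le_ne_top one_ne_top ((min_le_left _ _).trans (min_le_left _ _)),
    (min_le_left _ _).trans (min_le_right _ _),
    (mul_le_mul_right (min_le_right _ _) c).trans ENNReal.mul_div_le⟩

theorem countable_of_tsum_ne_top {ι : Type*} {f : ι → ℝ≥0∞} (h : ∑' i, f i ≠ ∞)
    (hf : ∀ i, f i ≠ 0) : Countable ι := by
  simpa [Function.support_eq_univ hf, countable_univ_iff] using
    Summable.countable_support_ennreal h

end ENNReal

theorem Measurable.indicator_of_domRestrict {β : Type*} [MeasurableSpace X] [MeasurableSpace β]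
    [Zero β] {A : Set X} {f : X → β} (hf : Measurable (A.domRestrict f)) (hA : MeasurableSet A) :
    Measurable (A.indicator f) := by
  refine measurable_of_restrict_of_restrict_compl hA ?_ ?_
  · convert hf using 1
    funext x
    exact indicator_of_mem x.2 f
  · convert measurable_const (a := (0 : β)) using 1
    funext x
    exact indicator_of_notMem x.2 f

theorem pairwise_disjoint_inter_preimage_Ioc_zpow {t : ℝ≥0∞} (ht : 1 ≤ t) (f : X → ℝ≥0∞)
    (B : Set X) :
    Pairwise (Function.onFun Disjoint fun k : ℤ => B ∩ f ⁻¹' Ioc (t ^ k) (t ^ (k + 1))) := by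
  have := Monotone.pairwise_disjoint_on_Ioc_succ (f := fun k : ℤ => t ^ k)
    fun _ _ => ENNReal.zpow_le_of_le ht
  simp only [Order.succ_eq_add_one] at this
  exact fun k l hkl => ((this hkl).preimage f).mono inter_subset_right inter_subset_right

theorem diff_iUnion_inter_preimage_Ioc_zpow_subset {t : ℝ≥0∞} (ht : 1 < t) (htop : t ≠ ∞)
    (f : X → ℝ≥0∞) (B : Set X) :
    B \ ⋃ k : ℤ, B ∩ f ⁻¹' Ioc (t ^ k) (t ^ (k + 1)) ⊆ {x ∈ B | f x = 0} ∪ {x ∈ B | f x = ∞} := by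
  intro x ⟨hxB, hxP⟩
  by_contra hx
  simp only [mem_union, mem_sep_iff, hxB, true_and, not_or] at hx
  obtain ⟨k, hk⟩ := ENNReal.exists_mem_Ioc_zpow hx.1 hx.2 ht htop
  exact hxP (mem_iUnion.2 ⟨k, hxB, hk⟩)

section LevelSets
variable [MeasurableSpace X]

theorem measure_le_mul_of_forall_le_mul {ν ρ : Measure X} {ι : Type*} [Countable ι]
    {B : Set X} {P : ι → Set X} (hPm : ∀ i, MeasurableSet (P i))
    (hPd : Pairwise (Function.onFun Disjoint P)) (hPB : ∀ i, P i ⊆ B) (hnull : ν (B \ ⋃ i, P i) = 0)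
    {t : ℝ≥0∞} (h : ∀ i, ν (P i) ≤ t * ρ (P i)) : ν B ≤ t * ρ B :=
  calc ν B ≤ ν (B ∩ ⋃ i, P i) + ν (B \ ⋃ i, P i) := measure_le_inter_add_diff _ _ _
    _ ≤ ∑' i, ν (P i) := by
      rw [hnull, add_zero]
      exact (measure_mono inter_subset_right).trans (measure_iUnion_le _)
    _ ≤ ∑' i, t * ρ (P i) := ENNReal.tsum_le_tsum h
    _ = t * ρ (⋃ i, P i) := by rw [ENNReal.tsum_mul_left, measure_iUnion hPd hPm]
    _ ≤ t * ρ B := by gcongr; exact iUnion_subset hPB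

theorem measure_le_mul_withDensity_and_withDensity_le_mul {ν ρ : Measure X} {f : X → ℝ≥0∞}
    (hf : Measurable f) {B : Set X} (hB : MeasurableSet B)
    (hle : ∀ E ⊆ B, MeasurableSet E → ∀ s, s ≠ 0 → s ≠ ∞ → (∀ x ∈ E, f x ≤ s) →
      ν E ≤ s * ρ E)
    (hge : ∀ E ⊆ B, MeasurableSet E → ∀ u, u ≠ 0 → u ≠ ∞ → (∀ x ∈ E, u < f x) →
      u * ρ E ≤ ν E)
    (hν : ν ({x ∈ B | f x = 0} ∪ {x ∈ B | f x = ∞}) = 0)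
    (hρ : ρ.withDensity f ({x ∈ B | f x = 0} ∪ {x ∈ B | f x = ∞}) = 0)
    {t : ℝ≥0∞} (ht : 1 < t) (htop : t ≠ ∞) :
    ν B ≤ t * ρ.withDensity f B ∧ ρ.withDensity f B ≤ t * ν B := by
  have ht0 : t ≠ 0 := (zero_lt_one.trans ht).ne'
  have hpow (k : ℤ) : t ^ k ≠ 0 ∧ t ^ k ≠ ∞ :=
    ⟨(ENNReal.zpow_pos ht0 htop k).ne', (ENNReal.zpow_lt_top ht0 htop k).ne⟩
  have hsucc (k : ℤ) : t ^ (k + 1) = t * t ^ k := by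
    rw [ENNReal.zpow_add ht0 htop, zpow_one, mul_comm]
  set P : ℤ → Set X := fun k => B ∩ f ⁻¹' Ioc (t ^ k) (t ^ (k + 1))
  have hPm (k : ℤ) : MeasurableSet (P k) := hB.inter (hf measurableSet_Ioc)
  have hPd : Pairwise (Function.onFun Disjoint P) :=
    pairwise_disjoint_inter_preimage_Ioc_zpow ht.le f B
  have hPB (k : ℤ) : P k ⊆ B := inter_subset_left
  have hrest := diff_iUnion_inter_preimage_Ioc_zpow_subset ht htop f B
  have hlow (k : ℤ) : t ^ k * ρ (P k) ≤ ρ.withDensity f (P k) := by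
    rw [withDensity_apply f (hPm k), ← setLIntegral_const]
    exact setLIntegral_mono hf fun x hx => hx.2.1.le
  have hup (k : ℤ) : ρ.withDensity f (P k) ≤ t ^ (k + 1) * ρ (P k) := by
    rw [withDensity_apply f (hPm k), ← setLIntegral_const]
    exact setLIntegral_mono measurable_const fun x hx => hx.2.2
  constructor
  · refine measure_le_mul_of_forall_le_mul hPm hPd hPB (measure_mono_null hrest hν)
      fun k => ?_
    calc ν (P k) ≤ t ^ (k + 1) * ρ (P k) :=
          hle _ (hPB k) (hPm k) _ (hpow _).1 (hpow _).2 fun x hx => hx.2.2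
      _ = t * (t ^ k * ρ (P k)) := by rw [hsucc, mul_assoc]
      _ ≤ t * ρ.withDensity f (P k) := by gcongr; exact hlow k
  · refine measure_le_mul_of_forall_le_mul hPm hPd hPB (measure_mono_null hrest hρ)
      fun k => ?_
    calc ρ.withDensity f (P k) ≤ t ^ (k + 1) * ρ (P k) := hup k
      _ = t * (t ^ k * ρ (P k)) := by rw [hsucc, mul_assoc]
      _ ≤ t * ν (P k) := by
          gcongr; exact hge _ (hPB k) (hPm k) _ (hpow _).1 (hpow _).2 fun x hx => hx.2.1

theorem measure_eq_setLIntegral_of_density_bounds {ν ρ : Measure X} {f : X → ℝ≥0∞}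
    (hf : Measurable f) {B : Set X} (hB : MeasurableSet B)
    (hle : ∀ E ⊆ B, MeasurableSet E → ∀ s, s ≠ 0 → s ≠ ∞ → (∀ x ∈ E, f x ≤ s) →
      ν E ≤ s * ρ E)
    (hge : ∀ E ⊆ B, MeasurableSet E → ∀ u, u ≠ 0 → u ≠ ∞ → (∀ x ∈ E, u < f x) →
      u * ρ E ≤ ν E)
    (h0 : ν {x ∈ B | f x = 0} = 0) (hinf : ν {x ∈ B | f x = ∞} = 0) :
    ν B = ∫⁻ x in B, f x ∂ρ := by
  have hZ : MeasurableSet {x ∈ B | f x = 0} := hB.inter (hf (measurableSet_singleton 0))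
  have hW : MeasurableSet {x ∈ B | f x = ∞} := hB.inter (hf (measurableSet_singleton ∞))
  have hρW : ρ {x ∈ B | f x = ∞} = 0 := by
    simpa [hinf] using hge _ (sep_subset _ _) hW 1 one_ne_zero one_ne_top
      fun x hx => hx.2 ▸ one_lt_top
  have hρ : ρ.withDensity f ({x ∈ B | f x = 0} ∪ {x ∈ B | f x = ∞}) = 0 := by
    refine measure_union_null ?_ (withDensity_absolutelyContinuous ρ f hρW)
    rw [withDensity_apply f hZ]
    exact (setLIntegral_congr_fun hZ fun x hx => hx.2).trans lintegral_zero
  have key {t : ℝ≥0∞} (ht : 1 < t) (htop : t ≠ ∞) :=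
    measure_le_mul_withDensity_and_withDensity_le_mul hf hB hle hge
      (measure_union_null h0 hinf) hρ ht htop
  have le_of_forall_le_mul (a b : ℝ≥0∞) (h : ∀ t, 1 < t → t ≠ ∞ → a ≤ t * b) : a ≤ b := by
    simpa using ENNReal.le_mul_of_forall_lt_le_mul one_ne_top (Or.inl one_ne_zero) h
  rw [← withDensity_apply f hB]
  exact le_antisymm (le_of_forall_le_mul _ _ fun t ht htop => (key ht htop).1)
    (le_of_forall_le_mul _ _ fun t ht htop => (key ht htop).2)

end LevelSets

section Covering
variable [MetricSpace X]

theorem disjoint_of_ediam_lt_infEDist {x : X} {U W : Set X} (hx : x ∈ U)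
    (hU : ediam U < infEDist x W) : Disjoint U W :=
  Set.disjoint_left.2 fun _ hy hyW =>
    ((infEDist_le_edist_of_mem hyW).trans (edist_le_ediam_of_mem hx hy)).not_gt hU

theorem exists_pairwiseDisjoint_subfamily_ediam_le_two_mul {𝔉 : Set (Set X)} {δ : ℝ≥0∞}
    (hδ : δ ≠ ∞) (h𝔉 : ∀ T ∈ 𝔉, T.Nonempty ∧ ediam T ≤ δ) :
    ∃ G ⊆ 𝔉, G.PairwiseDisjoint id ∧
      ∀ T ∈ 𝔉, ∃ T' ∈ G, (T ∩ T').Nonempty ∧ ediam T ≤ 2 * ediam T' := by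
  obtain ⟨G, hG𝔉, hGd, hGcov⟩ := Vitali.exists_disjoint_subfamily_covering_enlargement id 𝔉
    (fun T => (ediam T).toReal) 2 one_lt_two (fun _ _ => ENNReal.toReal_nonneg) δ.toReal
    (fun T hT => ENNReal.toReal_mono hδ (h𝔉 T hT).2) fun T hT => (h𝔉 T hT).1
  refine ⟨G, hG𝔉, hGd, fun T hT => ?_⟩
  obtain ⟨T', hT'G, hTT', hdiam⟩ := hGcov T hT
  have hfin : ∀ T ∈ 𝔉, ediam T ≠ ∞ := fun T hT => ne_top_of_le_ne_top hδ (h𝔉 T hT).2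
  refine ⟨T', hT'G, hTT', (ENNReal.toReal_le_toReal (hfin T hT) ?_).1 ?_⟩
  · exact ENNReal.mul_ne_top ENNReal.ofNat_ne_top (hfin T' (hG𝔉 hT'G))
  · simpa [ENNReal.toReal_mul] using hdiam

theorem subset_biUnion_union_iUnion_hatSet {S 𝔉 : Set (Set X)} (h𝔉S : 𝔉 ⊆ S) {ι : Type*}
    {T : ι → Set X} (hT : ∀ i, IsClosed (T i))
    (h𝔉T : ∀ U ∈ 𝔉, ∃ i, (U ∩ T i).Nonempty ∧ ediam U ≤ 2 * ediam (T i)) {E : Set X}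
    (hE : ∀ x ∈ E, ∀ ε > 0, ∃ U ∈ 𝔉, x ∈ U ∧ ediam U < ε) (J : Finset ι) :
    E ⊆ (⋃ i ∈ J, T i) ∪ ⋃ i : {i // i ∉ J}, hatSet S (T i) := by
  intro x hx
  by_cases hxJ : x ∈ ⋃ i ∈ J, T i
  · exact Or.inl hxJ
  have hclosed : IsClosed (⋃ i ∈ J, T i) := isClosed_biUnion_finset fun i _ => hT i
  obtain ⟨U, hU𝔉, hxU, hUε⟩ := hE x hx _
    (infEDist_pos_iff_notMem_closure.2 (hclosed.closure_eq.symm ▸ hxJ))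
  obtain ⟨i, hUi, hUdiam⟩ := h𝔉T U hU𝔉
  have hiJ : i ∉ J := fun hiJ =>
    (disjoint_of_ediam_lt_infEDist hxU hUε).ne_of_mem hUi.some_mem.1
      (mem_biUnion hiJ hUi.some_mem.2) rfl
  exact Or.inr (mem_iUnion.2 ⟨⟨i, hiJ⟩, U, ⟨h𝔉S hU𝔉, hUi, hUdiam⟩, hxU⟩)

end Covering

theorem SigmaFiniteOpen.outerRegular [MetricSpace X] [MeasurableSpace X] [BorelSpace X]
    {μ : Measure X} (h : SigmaFiniteOpen μ) : μ.OuterRegular := by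
  obtain ⟨U, hUo, hUc, hUμ⟩ := h
  have (n : ℕ) : IsFiniteMeasure (μ.restrict (U n)) := isFiniteMeasure_restrict.2 (hUμ n).ne
  exact Measure.OuterRegular.of_restrict (fun n => inferInstance) hUo hUc.ge

open Classical in
noncomputable def extSize (S : Set (Set X)) (ζ : Set X → ℝ≥0∞) : Set X → ℝ≥0∞ :=
  fun T => if T ∈ S then ζ T else ∞

theorem extSize_of_mem {S : Set (Set X)} {ζ : Set X → ℝ≥0∞} {T : Set X} (hT : T ∈ S) :
    extSize S ζ T = ζ T :=
  if_pos hT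

theorem extSize_of_notMem {S : Set (Set X)} {ζ : Set X → ℝ≥0∞} {T : Set X} (hT : T ∉ S) :
    extSize S ζ T = ∞ :=
  if_neg hT

section CaratheodoryPremeasure
variable [MetricSpace X] {S : Set (Set X)} {ζ : Set X → ℝ≥0∞}

theorem mkMetric'_pre_le_tsum {ι : Type*} [Countable ι] {T : ι → Set X} {r η : ℝ≥0∞}
    (hη : η ≠ ∞) (hT : ∀ i, T i ∈ S ∧ ediam (T i) ≤ r)
    (hhat : ∀ i, ∃ T' ∈ S, hatSet S (T i) ⊆ T' ∧ ediam T' ≤ r ∧ ζ T' ≤ η * ζ (T i))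
    (hsum : ∑' i, ζ (T i) ≠ ∞) {E : Set X}
    (hE : ∀ J : Finset ι, E ⊆ (⋃ i ∈ J, T i) ∪ ⋃ i : {i // i ∉ J}, hatSet S (T i)) :
    OuterMeasure.mkMetric'.pre (extSize S ζ) r E ≤ ∑' i, ζ (T i) := by
  set m := OuterMeasure.mkMetric'.pre (extSize S ζ) r
  choose T' hT'S hT'hat hT'r hT'ζ using hhat
  have hJ (J : Finset ι) : m E ≤ ∑' i, ζ (T i) + η * ∑' i : {i // i ∉ J}, ζ (T i) :=
    calc m E ≤ m (⋃ i ∈ J, T i) + m (⋃ i : {i // i ∉ J}, T' i) :=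
          (measure_mono ((hE J).trans (union_subset_union_right _
            (iUnion_mono fun i => hT'hat i)))).trans (measure_union_le _ _)
      _ ≤ ∑ i ∈ J, ζ (T i) + ∑' i : {i // i ∉ J}, η * ζ (T i) := by
          gcongr
          · exact (measure_biUnion_finset_le J T).trans (Finset.sum_le_sum fun i _ =>
              (OuterMeasure.mkMetric'.pre_le (hT i).2).trans_eq (extSize_of_mem (hT i).1))
          · exact (measure_iUnion_le _).trans (ENNReal.tsum_le_tsum fun i =>
              (OuterMeasure.mkMetric'.pre_le (hT'r i)).trans
                ((extSize_of_mem (hT'S i)).trans_le (hT'ζ i)))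
      _ ≤ ∑' i, ζ (T i) + η * ∑' i : {i // i ∉ J}, ζ (T i) := by
          rw [ENNReal.tsum_mul_left]; gcongr; exact ENNReal.sum_le_tsum J
  have hlim : Tendsto (fun J : Finset ι => ∑' i, ζ (T i) + η * ∑' i : {i // i ∉ J}, ζ (T i))
      atTop (𝓝 (∑' i, ζ (T i))) := by
    simpa using tendsto_const_nhds.add
      (ENNReal.Tendsto.const_mul (ENNReal.tendsto_tsum_compl_atTop_zero hsum) (Or.inr hη))
  exact ge_of_tendsto' hlim hJ

variable [MeasurableSpace X] [BorelSpace X]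

theorem mkMetric'_extSize_le_psiM (E : Set X) :
    OuterMeasure.mkMetric' (extSize S ζ) E ≤ psiM S ζ E :=
  le_toMeasure_apply _ (OuterMeasure.mkMetric'_isMetric _).le_caratheodory _

theorem psiM_apply {E : Set X} (hE : MeasurableSet E) :
    psiM S ζ E = OuterMeasure.mkMetric' (extSize S ζ) E :=
  toMeasure_apply _ (OuterMeasure.mkMetric'_isMetric _).le_caratheodory hE

end CaratheodoryPremeasure

section FedererDensity
variable [MeasurableSpace X] {μ : Measure X} {S : Set (Set X)} {ζ : Set X → ℝ≥0∞}

theorem measure_le_mul_of_fedQuot_lt (hζ : ∀ T ∈ S, ζ T ≠ ∞) {T : Set X} (hTS : T ∈ S)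
    {s : ℝ≥0∞} (hT : T ∈ adm μ S ζ → fedQuot μ ζ T < s) : μ T ≤ s * ζ T := by
  by_cases hadm : T ∈ adm μ S ζ
  · have hQ := hT hadm
    unfold fedQuot at hQ
    split_ifs at hQ with hζ0 hζtop
    · exact absurd hQ not_top_lt
    · exact absurd hζtop (hζ T hTS)
    · exact ((ENNReal.div_lt_iff (Or.inl hζ0) (Or.inl hζtop)).1 hQ).le
  · have : μ T = 0 := by
      by_contra h
      exact hadm ⟨hTS, fun h' => h h'.2, fun h' => hζ T hTS h'.1⟩
    simp [this]

variable [MetricSpace X]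

theorem exists_forall_fedQuot_lt_of_fedDensity_lt {x : X} {s : ℝ≥0∞}
    (hx : fedDensity μ S ζ x < s) :
    ∃ n : ℕ, ∀ T ∈ adm μ S ζ, x ∈ T → ediam T ≤ (n : ℝ≥0∞)⁻¹ → fedQuot μ ζ T < s := by
  obtain ⟨ε, hε⟩ := iInf_lt_iff.1 hx
  obtain ⟨hε0, hlt⟩ := iInf_lt_iff.1 hε
  obtain ⟨n, hn⟩ := ENNReal.exists_inv_nat_lt hε0.ne'
  refine ⟨n, fun T hT hxT hd => (le_iSup₂ (f := fun T (_ : T ∈ adm μ S ζ ∧ x ∈ T ∧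
    ediam T < ε) => fedQuot μ ζ T) T ⟨hT, hxT, hd.trans_lt hn⟩).trans_lt hlt⟩

theorem exists_subset_mul_lt_measure_of_lt_fedDensity (hζ : ∀ T ∈ S, ζ T ≠ ∞) {x : X}
    {u : ℝ≥0∞} (hx : u < fedDensity μ S ζ x) {V : Set X} (hV : IsOpen V) (hxV : x ∈ V)
    {ε : ℝ≥0∞} (hε : 0 < ε) : ∃ T ∈ S, T ⊆ V ∧ x ∈ T ∧ ediam T < ε ∧ u * ζ T < μ T := by
  have hxVc : 0 < infEDist x Vᶜ := infEDist_pos_iff_notMem_closure.2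
    (hV.isClosed_compl.closure_eq.symm ▸ not_not.2 hxV)
  obtain ⟨T, hT⟩ := lt_iSup_iff.1 (hx.trans_le (iInf₂_le _ (lt_min hε hxVc)))
  obtain ⟨⟨⟨hTS, hTμ, -⟩, hxT, hTε⟩, hT⟩ := lt_iSup_iff.1 hT
  refine ⟨T, hTS, disjoint_compl_right_iff_subset.1
    (disjoint_of_ediam_lt_infEDist hxT (hTε.trans_le (min_le_right _ _))), hxT,
    hTε.trans_le (min_le_left _ _), ?_⟩
  unfold fedQuot at hT
  split_ifs at hT with hζ0 hζtop
  · simpa [hζ0, pos_iff_ne_zero] using fun h => hTμ ⟨hζ0, h⟩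
  · exact absurd hζtop (hζ T hTS)
  · exact (ENNReal.lt_div_iff_mul_lt (Or.inl hζ0) (Or.inl hζtop)).1 hT

theorem measure_le_mul_mkMetric'_of_forall_fedQuot_lt (hζ : ∀ T ∈ S, ζ T ≠ ∞) {s : ℝ≥0∞}
    (hs0 : s ≠ 0) (hs : s ≠ ∞) {r : ℝ≥0∞} (hr : 0 < r) {E : Set X}
    (hE : ∀ x ∈ E, ∀ T ∈ adm μ S ζ, x ∈ T → ediam T ≤ r → fedQuot μ ζ T < s) :
    μ E ≤ s * OuterMeasure.mkMetric' (extSize S ζ) E := by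
  have hpre : s⁻¹ • OuterMeasure.restrict E μ.toOuterMeasure ≤
      OuterMeasure.mkMetric'.pre (extSize S ζ) r := by
    refine OuterMeasure.mkMetric'.le_pre.2 fun T hT => ?_
    rw [OuterMeasure.smul_apply, OuterMeasure.restrict_apply, smul_eq_mul,
      ENNReal.inv_mul_le_iff hs0 hs]
    by_cases hTS : T ∈ S
    · rcases (T ∩ E).eq_empty_or_nonempty with h | ⟨x, hxT, hxE⟩
      · simp [h]
      rw [extSize_of_mem hTS]
      exact (measure_mono inter_subset_left).trans
        (measure_le_mul_of_fedQuot_lt hζ hTS fun hadm => hE x hxE T hadm hxT hT)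
    · simp [extSize_of_notMem hTS, hs0]
  calc μ E = s * (s⁻¹ * μ E) := by rw [← mul_assoc, ENNReal.mul_inv_cancel hs0 hs, one_mul]
    _ ≤ s * OuterMeasure.mkMetric'.pre (extSize S ζ) r E := by gcongr; simpa using hpre E
    _ ≤ s * OuterMeasure.mkMetric' (extSize S ζ) E := by
      gcongr
      exact le_iSup₂ (f := fun r (_ : 0 < r) => OuterMeasure.mkMetric'.pre (extSize S ζ) r) r hr

theorem measure_le_mul_psiM_of_fedDensity_lt [BorelSpace X] (hζ : ∀ T ∈ S, ζ T ≠ ∞)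
    {s : ℝ≥0∞} (hs0 : s ≠ 0) (hs : s ≠ ∞) {E : Set X} (hE : ∀ x ∈ E, fedDensity μ S ζ x < s) :
    μ E ≤ s * psiM S ζ E := by
  set Em : ℕ → Set X := fun n =>
    {x ∈ E | ∀ T ∈ adm μ S ζ, x ∈ T → ediam T ≤ (n : ℝ≥0∞)⁻¹ → fedQuot μ ζ T < s}
  have hmono : Monotone Em := fun m n hmn x hx =>
    ⟨hx.1, fun T hT hxT hd => hx.2 T hT hxT (hd.trans (ENNReal.inv_le_inv.2 (by gcongr)))⟩
  have hEm : E = ⋃ n, Em n := by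
    refine Subset.antisymm (fun x hx => ?_) (iUnion_subset fun n => sep_subset _ _)
    obtain ⟨n, hn⟩ := exists_forall_fedQuot_lt_of_fedDensity_lt (hE x hx)
    exact mem_iUnion.2 ⟨n, hx, hn⟩
  calc μ E = ⨆ n, μ (Em n) := by rw [← hmono.measure_iUnion, ← hEm]
    _ ≤ s * psiM S ζ E := iSup_le fun n =>
      (measure_le_mul_mkMetric'_of_forall_fedQuot_lt hζ hs0 hs
        (ENNReal.inv_pos.2 (ENNReal.natCast_ne_top n)) fun x hx => hx.2).trans
        (by gcongr; exact (measure_mono (sep_subset _ _)).trans (mkMetric'_extSize_le_psiM E))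

theorem measure_le_mul_psiM_of_fedDensity_le [BorelSpace X] (hζ : ∀ T ∈ S, ζ T ≠ ∞)
    {s : ℝ≥0∞} (hs0 : s ≠ 0) (hs : s ≠ ∞) {E : Set X} (hE : ∀ x ∈ E, fedDensity μ S ζ x ≤ s) :
    μ E ≤ s * psiM S ζ E :=
  ENNReal.le_mul_of_forall_lt_le_mul hs (Or.inl hs0) fun _ hs' hs'top =>
    measure_le_mul_psiM_of_fedDensity_lt hζ (ne_bot_of_gt hs') hs'top
      fun x hx => (hE x hx).trans_lt hs'

theorem measure_eq_zero_of_fedDensity_eq_zero [BorelSpace X] (hζ : ∀ T ∈ S, ζ T ≠ ∞)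
    {E : Set X} (hE : ∀ x ∈ E, fedDensity μ S ζ x = 0) (hψ : psiM S ζ E ≠ ∞) : μ E = 0 :=
  le_antisymm (by
    simpa using ENNReal.le_mul_of_forall_lt_le_mul zero_ne_top (Or.inr hψ) fun s hs hsfin =>
      measure_le_mul_psiM_of_fedDensity_lt hζ hs.ne' hsfin fun x hx => (hE x hx).symm ▸ hs)
    zero_le

end FedererDensity

section VitaliEstimate
variable [MetricSpace X] [MeasurableSpace X] [BorelSpace X] {μ : Measure X}
  {S : Set (Set X)} {ζ : Set X → ℝ≥0∞}

theorem mul_mkMetric'_le_measure_of_lt_fedDensity (hS : ∀ T ∈ S, IsClosed T)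
    (hζ : ∀ T ∈ S, ζ T ≠ ∞) {c η : ℝ≥0∞} (hc : c ≠ ∞) (hη : η ≠ ∞)
    (hdb : ∀ T ∈ S, ∃ T' ∈ S, hatSet S T ⊆ T' ∧ ediam T' ≤ c * ediam T ∧ ζ T' ≤ η * ζ T)
    {u : ℝ≥0∞} (hu : u ≠ 0) {E V : Set X} (hV : IsOpen V) (hVμ : μ V ≠ ∞) (hEV : E ⊆ V)
    (hE : ∀ x ∈ E, u < fedDensity μ S ζ x) :
    u * OuterMeasure.mkMetric' (extSize S ζ) E ≤ μ V := by
  simp only [OuterMeasure.mkMetric', OuterMeasure.iSup_apply, ENNReal.mul_iSup]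
  refine iSup₂_le fun r hr => ?_
  obtain ⟨δ, hδ0, hδ, hδr, hcδ⟩ := ENNReal.exists_pos_ne_top_le_and_mul_le hr hc
  set 𝔉 := {T ∈ S | T ⊆ V ∧ ediam T ≤ δ ∧ u * ζ T < μ T}
  have hfine : ∀ x ∈ E, ∀ ε > 0, ∃ T ∈ 𝔉, x ∈ T ∧ ediam T < ε := by
    intro x hx ε hε
    obtain ⟨T, hTS, hTV, hxT, hTε, hTμ⟩ :=
      exists_subset_mul_lt_measure_of_lt_fedDensity hζ (hE x hx) hV (hEV hx) (lt_min hε hδ0)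
    exact ⟨T, ⟨hTS, hTV, (hTε.trans_le (min_le_right _ _)).le, hTμ⟩, hxT,
      hTε.trans_le (min_le_left _ _)⟩
  obtain ⟨G, hG𝔉, hGd, hGcov⟩ := exists_pairwiseDisjoint_subfamily_ediam_le_two_mul (𝔉 := 𝔉) hδ
    fun T hT => ⟨nonempty_of_measure_ne_zero (zero_le.trans_lt hT.2.2.2).ne', hT.2.2.1⟩
  have hμG : ∑' T : G, μ T ≤ μ V :=
    (tsum_meas_le_meas_iUnion_of_disjoint μ (fun T : G => (hS _ (hG𝔉 T.2).1).measurableSet)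
      fun (T T' : G) h => hGd T.2 T'.2 (Subtype.coe_injective.ne h)).trans
      (measure_mono (iUnion_subset fun T : G => (hG𝔉 T.2).2.1))
  have hζG : u * ∑' T : G, ζ T ≤ μ V :=
    (ENNReal.tsum_mul_left.symm.le.trans
      (ENNReal.tsum_le_tsum fun T => (hG𝔉 T.2).2.2.2.le)).trans hμG
  have : Countable G := ENNReal.countable_of_tsum_ne_top (ne_top_of_le_ne_top hVμ hμG)
    fun T => (zero_le.trans_lt (hG𝔉 T.2).2.2.2).ne'
  calc u * OuterMeasure.mkMetric'.pre (extSize S ζ) r E ≤ u * ∑' T : G, ζ T := by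
        gcongr
        refine mkMetric'_pre_le_tsum hη (fun T => ⟨(hG𝔉 T.2).1, (hG𝔉 T.2).2.2.1.trans hδr⟩)
          (fun T => ?_) (fun h => hVμ (top_le_iff.1 (by simpa [h, hu] using hζG)))
          (subset_biUnion_union_iUnion_hatSet (fun T hT => hT.1) (fun T => hS _ (hG𝔉 T.2).1)
            (fun U hU => ?_) hfine)
        · obtain ⟨T', hT'S, hhat, hdiam, hζT'⟩ := hdb T (hG𝔉 T.2).1
          exact ⟨T', hT'S, hhat, hdiam.trans ((mul_le_mul_right (hG𝔉 T.2).2.2.1 c).trans hcδ),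
            hζT'⟩
        · obtain ⟨T', hT'G, hUT', hdiam⟩ := hGcov U hU
          exact ⟨⟨T', hT'G⟩, hUT', hdiam⟩
    _ ≤ μ V := hζG

theorem mul_psiM_le_measure_of_lt_fedDensity (hσ : SigmaFiniteOpen μ)
    (hS : ∀ T ∈ S, IsClosed T) (hζ : ∀ T ∈ S, ζ T ≠ ∞) {c η : ℝ≥0∞} (hc : c ≠ ∞) (hη : η ≠ ∞)
    (hdb : ∀ T ∈ S, ∃ T' ∈ S, hatSet S T ⊆ T' ∧ ediam T' ≤ c * ediam T ∧ ζ T' ≤ η * ζ T)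
    {u : ℝ≥0∞} (hu : u ≠ 0) {E : Set X} (hEm : MeasurableSet E)
    (hE : ∀ x ∈ E, u < fedDensity μ S ζ x) : u * psiM S ζ E ≤ μ E := by
  have := hσ.outerRegular
  rw [psiM_apply hEm, Set.measure_eq_iInf_isOpen E μ]
  refine le_iInf₂ fun V hEV => le_iInf fun hV => ?_
  rcases eq_or_ne (μ V) ∞ with hVμ | hVμ
  · exact hVμ ▸ le_top
  · exact mul_mkMetric'_le_measure_of_lt_fedDensity hS hζ hc hη hdb hu hV hVμ hEV hE

end VitaliEstimate

theorem stmt6_general [MetricSpace X] [MeasurableSpace X] [BorelSpace X]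
    (μ : Measure X) (hσ : SigmaFiniteOpen μ)
    (S : Set (Set X)) (hS : ∀ T ∈ S, IsClosed T)
    (ζ : Set X → ℝ≥0∞) (hζ : ∀ T ∈ S, ζ T ≠ ∞)
    (hdb : DoublingSize S ζ)
    (A : Set X) (hA : MeasurableSet A)
    (hmeas : Measurable (A.restrict (fedDensity μ S ζ)))
    (h0 : psiM S ζ {x ∈ A | fedDensity μ S ζ x = 0} < ∞)
    (hinf : μ {x ∈ A | fedDensity μ S ζ x = ∞} = 0) :
    ∀ B ⊆ A, MeasurableSet B →
      μ B = ∫⁻ x in B, fedDensity μ S ζ x ∂(psiM S ζ) := by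
  intro B hBA hB
  obtain ⟨c, η, -, hc, -, hη, hdb⟩ := hdb
  set F := A.indicator (fedDensity μ S ζ)
  have hF : Measurable F := hmeas.indicator_of_domRestrict hA
  have hFB : ∀ x ∈ B, F x = fedDensity μ S ζ x := fun x hx => indicator_of_mem (hBA hx) _
  rw [← setLIntegral_congr_fun hB hFB]
  have hsub (a : ℝ≥0∞) : {x ∈ B | F x = a} ⊆ {x ∈ A | fedDensity μ S ζ x = a} :=
    fun x hx => ⟨hBA hx.1, hFB x hx.1 ▸ hx.2⟩
  refine measure_eq_setLIntegral_of_density_bounds hF hB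
    (fun E hEB _ s hs0 hs hEs => measure_le_mul_psiM_of_fedDensity_le hζ hs0 hs fun x hx =>
      hFB x (hEB hx) ▸ hEs x hx)
    (fun E hEB hE u hu0 _ hEu => mul_psiM_le_measure_of_lt_fedDensity hσ hS hζ hc.ne hη.ne hdb
      hu0 hE fun x hx => hFB x (hEB hx) ▸ hEu x hx)
    (measure_eq_zero_of_fedDensity_eq_zero hζ (fun x hx => (hsub 0 hx).2)
      (ne_top_of_le_ne_top h0.ne (measure_mono (hsub 0))))
    (measure_mono_null (hsub ∞) hinf)

/-- Measure theoretic area formula. Let `μ` be a Borel regular measure,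
σ-finite via a countable open cover by sets of finite measure, `S` a family of closed sets,
`ζ : S → [0,∞)` satisfying the doubling-type condition, `A` Borel with `S_{μ,ζ}` covering
`A` finely and `F^ζ(μ,·)` Borel on `A`. If `ψ_ζ({F^ζ(μ,·) = 0}) < ∞` and
`μ({F^ζ(μ,·) = ∞}) = 0`, then `μ(B) = ∫_B F^ζ(μ,x) dψ_ζ(x)` for every Borel `B ⊆ A`. -/
theorem stmt6 [MetricSpace X] [MeasurableSpace X] [BorelSpace X]
    (μ : Measure X) (hreg : BorelRegular μ) (hσ : SigmaFiniteOpen μ)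
    (S : Set (Set X)) (hS : ∀ T ∈ S, IsClosed T)
    (ζ : Set X → ℝ≥0∞) (hζ : ∀ T ∈ S, ζ T ≠ ∞)
    (hdb : DoublingSize S ζ)
    (A : Set X) (hA : MeasurableSet A)
    (hfine : ∀ x ∈ A, Fine (adm μ S ζ) x)
    (hmeas : Measurable (A.restrict (fedDensity μ S ζ)))
    (h0 : psiM S ζ {x ∈ A | fedDensity μ S ζ x = 0} < ∞)
    (hinf : μ {x ∈ A | fedDensity μ S ζ x = ∞} = 0) :
    ∀ B ⊆ A, MeasurableSet B →
      μ B = ∫⁻ x in B, fedDensity μ S ζ x ∂(psiM S ζ) :=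
  stmt6_general μ hσ S hS ζ hζ hdb A hA hmeas h0 hinf
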